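/- Let G be a DAG over O ∪ L ∪ S ∪ M where no vertex of M is an ancestor of any vertex in O ∪ S or of any other vertex of M. Fix S_l ⊆ S ∪ M. Define an oracle-wrapper relation I(O_i, O_j, W) that holds iff both O_i ⊥_d O_j | W ∪ S_t(O_i,O_j,W) and O_i ⊥_d O_j | W ∪ S_l, where S_t(O_i,O_j,W) ⊆ S_l is any assignment with S_l \ S_t(O_i,O_j,W) ⊆ M. Then for all O_i, O_j, W: I(O_i, O_j, W) holds iff O_i ⊥_d O_j | W ∪ S_l. -/

import Mathlib

/-! An active path given `W ∪ S_t` stays active given the larger set `W ∪ S_l`: colliders keep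
their descendants, and a non-collider `v` that becomes blocked lies in `S_l \ S_t ⊆ M`. Following
the path from `v` along an out-edge until the first collider or the end shows that `v` is an
ancestor of a conditioning vertex or of an endpoint. A vertex of `M` has no such descendant:
its descendants avoid `O ∪ S` and meet `M` only in `v` itself, which is not in `S_t`. -/

variable {V : Type*}

/-- `Ancestor E x y`: there is a (possibly trivial) directed path from `x` to `y`. -/
def Ancestor (E : V → V → Prop) (x y : V) : Prop :=
  Relation.ReflTransGen E x y

/-- A directed graph is acyclic (a DAG) if it has no directed cycles. -/
def Acyclic (E : V → V → Prop) : Prop :=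
  ∀ v : V, ¬ Relation.TransGen E v v

/-- `v` is a collider on the path (vertex list) `l`. -/
def ColliderOn (E : V → V → Prop) (l : List V) (v : V) : Prop :=
  ∃ x y : V, [x, v, y] <:+: l ∧ E x v ∧ E y v

/-- `v` is an interior non-collider on the path `l`. -/
def NonColliderOn (E : V → V → Prop) (l : List V) (v : V) : Prop :=
  (∃ x y : V, [x, v, y] <:+: l) ∧ ¬ ColliderOn E l v

/-- `l` is a path between `a` and `b` that is active given the conditioning set `C`:
every collider on `l` has a descendant in `C` and no non-collider on `l` is in `C`. -/
def ActivePath (E : V → V → Prop) (C : Set V) (a b : V) (l : List V) : Prop :=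
  l.head? = some a ∧ l.getLast? = some b ∧ l.Nodup ∧
  l.Chain' (fun u v => E u v ∨ E v u) ∧
  (∀ v, ColliderOn E l v → ∃ d ∈ C, Ancestor E v d) ∧
  (∀ v, NonColliderOn E l v → v ∉ C)

/-- `a` and `b` are d-connected given `C`. -/
def DConn (E : V → V → Prop) (C : Set V) (a b : V) : Prop :=
  ∃ l : List V, ActivePath E C a b l

/-- `a` and `b` are d-separated given `C`. -/
def DSep (E : V → V → Prop) (C : Set V) (a b : V) : Prop :=
  ¬ DConn E C a b

section

variable {E : V → V → Prop} {C : Set V} {a b : V} {l : List V}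

theorem colliderOn_reverse {v : V} : ColliderOn E l.reverse v ↔ ColliderOn E l v := by
  constructor <;> rintro ⟨x, y, hxy, hx, hy⟩ <;> refine ⟨y, x, ?_, hy, hx⟩
  · simpa using List.reverse_infix.mpr hxy
  · simpa using List.reverse_infix.mpr hxy

namespace ActivePath

theorem reverse (h : ActivePath E C a b l) : ActivePath E C b a l.reverse := by
  obtain ⟨ha, hb, hnodup, hchain, hcoll, hnoncoll⟩ := h
  refine ⟨by simpa using hb, by simpa using ha, List.nodup_reverse.mpr hnodup,
    List.isChain_reverse.mpr (hchain.imp fun _ _ => Or.symm),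
    fun v hv => hcoll v (colliderOn_reverse.mp hv), ?_⟩
  rintro v ⟨⟨x, y, hxy⟩, hnc⟩
  exact hnoncoll v
    ⟨⟨y, x, by simpa using List.reverse_infix.mpr hxy⟩, mt colliderOn_reverse.mpr hnc⟩

theorem exists_ancestor_of_suffix (h : ActivePath E C a b l) :
    ∀ {suf : List V} {v y : V}, v :: y :: suf <:+ l → E v y →
      ∃ d, Ancestor E v d ∧ (d ∈ C ∨ d = b) := by
  obtain ⟨-, hb, -, hchain, hcoll, -⟩ := h
  intro suf
  induction suf with
  | nil =>
    rintro v y ⟨p, rfl⟩ hvy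
    exact ⟨y, .single hvy, Or.inr (by simpa using hb)⟩
  | cons z suf ih =>
    intro v y hsuf hvy
    have hyz : E y z ∨ E z y := by
      simpa using (hchain.suffix ((List.suffix_cons v _).trans hsuf)).take 2
    rcases hyz with hyz | hzy
    · obtain ⟨d, hyd, hd⟩ := ih ((List.suffix_cons v _).trans hsuf) hyz
      exact ⟨d, .head hvy hyd, hd⟩
    · have hcollider : ColliderOn E l y :=
        ⟨v, z, (List.prefix_append [v, y, z] suf).isInfix.trans hsuf.isInfix, hvy, hzy⟩
      obtain ⟨d, hdC, hyd⟩ := hcoll y hcollider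
      exact ⟨d, .head hvy hyd, Or.inl hdC⟩

theorem exists_ancestor_of_nonColliderOn (h : ActivePath E C a b l) {v : V}
    (hv : NonColliderOn E l v) : ∃ d, Ancestor E v d ∧ (d ∈ C ∨ d = a ∨ d = b) := by
  obtain ⟨⟨x, y, s, t, rfl⟩, hnc⟩ := hv
  have hchain := h.2.2.2.1
  have hxv : E x v ∨ E v x := by
    simpa using (hchain.infix ⟨s, y :: t, by simp⟩ : [x, v].IsChain _)
  have hvy : E v y ∨ E y v := by
    simpa using (hchain.infix ⟨s ++ [x], t, by simp⟩ : [v, y].IsChain _)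
  rcases hvy with hvy | hyv
  · obtain ⟨d, hvd, hd⟩ := h.exists_ancestor_of_suffix (suf := t) ⟨s ++ [x], by simp⟩ hvy
    exact ⟨d, hvd, hd.imp_right Or.inr⟩
  rcases hxv with hxv | hvx
  · exact absurd ⟨x, y, ⟨s, t, rfl⟩, hxv, hyv⟩ hnc
  · obtain ⟨d, hvd, hd⟩ := h.reverse.exists_ancestor_of_suffix (suf := s.reverse) (y := x)
      ⟨t.reverse ++ [y], by simp⟩ hvx
    exact ⟨d, hvd, hd.imp_right Or.inl⟩

theorem mono {C' : Set V} (h : ActivePath E C a b l) (hCC' : C ⊆ C')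
    (hnew : ∀ v ∈ C' \ C, ∀ d, Ancestor E v d → d ∉ C ∧ d ≠ a ∧ d ≠ b) :
    ActivePath E C' a b l := by
  have ⟨ha, hb, hnodup, hchain, hcoll, hnoncoll⟩ := h
  refine ⟨ha, hb, hnodup, hchain, fun v hv => ?_, fun v hv hvC' => ?_⟩
  · obtain ⟨d, hdC, hvd⟩ := hcoll v hv
    exact ⟨d, hCC' hdC, hvd⟩
  · obtain ⟨d, hvd, hd⟩ := h.exists_ancestor_of_nonColliderOn hv
    obtain ⟨hdC, hda, hdb⟩ := hnew v ⟨hvC', hnoncoll v hv⟩ d hvd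
    rcases hd with hd | hd | hd
    exacts [hdC hd, hda hd, hdb hd]

end ActivePath

theorem DConn.mono {C' : Set V} (h : DConn E C a b) (hCC' : C ⊆ C')
    (hnew : ∀ v ∈ C' \ C, ∀ d, Ancestor E v d → d ∉ C ∧ d ≠ a ∧ d ≠ b) :
    DConn E C' a b :=
  let ⟨l, hl⟩ := h
  ⟨l, hl.mono hCC' hnew⟩

end

theorem stmt_11_general (E : V → V → Prop) (O S M : Set V)
    (hM : ∀ m ∈ M, ∀ x : V, Ancestor E m x → x ∉ O ∪ S ∧ (x ∈ M → x = m))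
    (Sl : Set V) (hSl : Sl ⊆ S ∪ M)
    (St : V → V → Set V → Set V)
    (hSt : ∀ i j : V, ∀ W : Set V, St i j W ⊆ Sl ∧ Sl \ St i j W ⊆ M) :
    ∀ Oi ∈ O, ∀ Oj ∈ O, ∀ W : Set V, W ⊆ O \ {Oi, Oj} →
      ((DSep E (W ∪ St Oi Oj W) Oi Oj ∧ DSep E (W ∪ Sl) Oi Oj) ↔
        DSep E (W ∪ Sl) Oi Oj) := by
  intro Oi hOi Oj hOj W hW
  obtain ⟨hStSl, hSlM⟩ := hSt Oi Oj W
  refine ⟨And.right, fun hsep => ⟨fun hconn => hsep (hconn.mono ?_ ?_), hsep⟩⟩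
  · exact Set.union_subset_union_right W hStSl
  rintro v ⟨hvWSl, hvWSt⟩ d hvd
  have hvM : v ∈ M := hSlM ⟨hvWSl.resolve_left (hvWSt ∘ Or.inl), hvWSt ∘ Or.inr⟩
  obtain ⟨hdO, hdM⟩ := hM v hvM d hvd
  have hdSt : d ∉ St Oi Oj W := fun hd =>
    (hSl (hStSl hd)).elim (hdO ∘ Or.inr) fun hd' => hvWSt (Or.inr (hdM hd' ▸ hd))
  refine ⟨fun hd => hd.elim (fun hdW => hdO (Or.inl (hW hdW).1)) hdSt, ?_, ?_⟩
  · rintro rfl; exact hdO (Or.inl hOi)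
  · rintro rfl; exact hdO (Or.inl hOj)

/-- Soundness of the test-wise deletion CI-oracle wrapper: the wrapper relation
(d-separation given both `W ∪ S_t(O_i,O_j,W)` and `W ∪ S_l`) holds iff
`O_i ⊥_d O_j | W ∪ S_l`. -/
theorem stmt_11 (E : V → V → Prop) (hacyc : Acyclic E) (O L S M : Set V)
    (hM : ∀ m ∈ M, ∀ x : V, Ancestor E m x → x ∉ O ∪ S ∧ (x ∈ M → x = m))
    (Sl : Set V) (hSl : Sl ⊆ S ∪ M)
    (St : V → V → Set V → Set V)
    (hSt : ∀ i j : V, ∀ W : Set V, St i j W ⊆ Sl ∧ Sl \ St i j W ⊆ M) :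
    ∀ Oi ∈ O, ∀ Oj ∈ O, ∀ W : Set V, W ⊆ O \ {Oi, Oj} →
      ((DSep E (W ∪ St Oi Oj W) Oi Oj ∧ DSep E (W ∪ Sl) Oi Oj) ↔
        DSep E (W ∪ Sl) Oi Oj) :=
  stmt_11_general E O S M hM Sl hSl St hSt
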